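/- arXiv:2111.03949 — 2 statements merged into one kernel-verified Lean document; each statement's English description precedes it below -/
import Mathlib

section
/- Let T > 0, let t ∈ [0, T], let K ≥ 1, let λ₀ ≥ 0, and for each i = 1, …, K let φ_i : ℝ → ℝ be a causal kernel with φ_i(0) = 0, let S_i be a finite set of points in [0, T], and let λ_i : ℝ → ℝ be integrable on [0, T] with λ_i(s) > 0 for every s ∈ S_i. Then λ₀ · Π_{i=1}^K [ exp( Σ_{s∈S_i} log(λ_i(s) + φ_i(s − t)) − ∫₀^T (λ_i(x) + φ_i(x − t)) dx ) / exp( Σ_{s∈S_i} log λ_i(s) − ∫₀^T λ_i(x) dx ) ] = λ₀ · Π_{i=1}^K [ exp( −∫₀^{T−t} φ_i(u) du ) · Π_{s∈S_i, s>t} (λ_i(s) + φ_i(s − t)) / λ_i(s) ]. -/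
open MeasureTheory intervalIntegral

/-- Algebraic content of Proposition 1 of the deep Neyman–Scott process paper:
the Papangelou conditional intensity at time `t` equals the prior intensity `λ₀`
times, over all `K` child processes, `exp(−Φ_i(T−t))` times the product of
intensity ratios at child events after `t`. -/
theorem posterior_pcif
    (T t : ℝ) (hT : 0 < T) (ht : t ∈ Set.Icc (0 : ℝ) T)
    (K : ℕ) (hK : 1 ≤ K)
    (lam0 : ℝ) (hlam0 : 0 ≤ lam0)
    (φ : Fin K → ℝ → ℝ)
    (hcausal : ∀ i, ∀ x ≤ (0 : ℝ), φ i x = 0)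
    (hnonneg : ∀ i, ∀ x : ℝ, 0 ≤ φ i x)
    (hint : ∀ i, ∀ a b : ℝ, IntervalIntegrable (φ i) volume a b)
    (hφ0 : ∀ i, φ i 0 = 0)
    (S : Fin K → Finset ℝ) (hS : ∀ i, ∀ s ∈ S i, s ∈ Set.Icc (0 : ℝ) T)
    (lam : Fin K → ℝ → ℝ)
    (hlamInt : ∀ i, IntervalIntegrable (lam i) volume 0 T)
    (hlamPos : ∀ i, ∀ s ∈ S i, 0 < lam i s) :
    lam0 * ∏ i : Fin K,
        (Real.exp ((∑ s ∈ S i, Real.log (lam i s + φ i (s - t)))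
            - ∫ x in (0 : ℝ)..T, (lam i x + φ i (x - t)))
          / Real.exp ((∑ s ∈ S i, Real.log (lam i s)) - ∫ x in (0 : ℝ)..T, lam i x))
    = lam0 * ∏ i : Fin K,
        (Real.exp (-∫ u in (0 : ℝ)..(T - t), φ i u)
          * ∏ s ∈ (S i).filter (fun s => t < s), (lam i s + φ i (s - t)) / lam i s) := by
  congr 1
  apply Finset.prod_congr rfl
  intro i _
  -- integrability of shifted kernel
  have hshift : IntervalIntegrable (fun x => φ i (x - t)) volume 0 T := by
    have := (hint i (0 - t) (T - t)).comp_sub_right t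
    simpa using this
  -- the shifted integral equals the integral from 0 to T - t
  have hJ : (∫ x in (0 : ℝ)..T, φ i (x - t)) = ∫ u in (0 : ℝ)..(T - t), φ i u := by
    rw [intervalIntegral.integral_comp_sub_right]
    have h1 : (∫ u in (0 - t)..(0 : ℝ), φ i u) = 0 := by
      rw [show (0 : ℝ) - t = -t by ring]
      have : Set.EqOn (φ i) 0 (Set.uIcc (-t) 0) := by
        intro x hx
        rw [Set.uIcc_of_le (by linarith [ht.1])] at hx
        exact hcausal i x hx.2
      rw [intervalIntegral.integral_congr this]
      simp
    have hsplit : (∫ u in (0 - t)..(0 : ℝ), φ i u) + (∫ u in (0 : ℝ)..(T - t), φ i u)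
        = ∫ u in (0 - t)..(T - t), φ i u :=
      intervalIntegral.integral_add_adjacent_intervals (hint i _ _) (hint i _ _)
    rw [← hsplit, h1, zero_add]
  -- split the integral of the sum
  have hIadd : (∫ x in (0 : ℝ)..T, (lam i x + φ i (x - t)))
      = (∫ x in (0 : ℝ)..T, lam i x) + ∫ x in (0 : ℝ)..T, φ i (x - t) :=
    intervalIntegral.integral_add (hlamInt i) hshift
  -- positivity of the shifted intensities
  have hpos : ∀ s ∈ S i, 0 < lam i s + φ i (s - t) := fun s hs =>
    lt_of_lt_of_le (hlamPos i s hs) (le_add_of_nonneg_right (hnonneg i _))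
  -- convert exponentials of log-sums to products
  have hA : Real.exp (∑ s ∈ S i, Real.log (lam i s + φ i (s - t)))
      = ∏ s ∈ S i, (lam i s + φ i (s - t)) := by
    rw [Real.exp_sum]
    exact Finset.prod_congr rfl fun s hs => Real.exp_log (hpos s hs)
  have hB : Real.exp (∑ s ∈ S i, Real.log (lam i s))
      = ∏ s ∈ S i, lam i s := by
    rw [Real.exp_sum]
    exact Finset.prod_congr rfl fun s hs => Real.exp_log (hlamPos i s hs)
  have hPfull : (∏ s ∈ (S i).filter (fun s => t < s), (lam i s + φ i (s - t)) / lam i s)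
      = ∏ s ∈ S i, (lam i s + φ i (s - t)) / lam i s := by
    apply Finset.prod_subset (Finset.filter_subset _ _)
    intro s hs hns
    have hst : s ≤ t := le_of_not_gt (by simpa [Finset.mem_filter, hs] using hns)
    rw [hcausal i (s - t) (by linarith), add_zero, div_self (hlamPos i s hs).ne']
  have hkey : (∏ s ∈ S i, (lam i s + φ i (s - t)))
      = (∏ s ∈ (S i).filter (fun s => t < s), (lam i s + φ i (s - t)) / lam i s)
        * ∏ s ∈ S i, lam i s := by
    rw [hPfull, ← Finset.prod_mul_distrib]
    exact Finset.prod_congr rfl fun s hs => (div_mul_cancel₀ _ (hlamPos i s hs).ne').symm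
  have hne : (∏ s ∈ S i, lam i s) ≠ 0 :=
    (Finset.prod_pos fun s hs => hlamPos i s hs).ne'
  rw [hIadd, hJ, Real.exp_sub, Real.exp_sub, hA, hB, Real.exp_add, Real.exp_neg]
  rw [hkey]
  have hne2 : (∏ s ∈ (S i).filter (fun s => t < s), lam i s) ≠ 0 :=
    (Finset.prod_pos fun s hs => hlamPos i s (Finset.mem_filter.1 hs).1).ne'
  have e1 := Real.exp_ne_zero (∫ x in (0 : ℝ)..T, lam i x)
  have e2 := Real.exp_ne_zero (∫ u in (0 : ℝ)..(T - t), φ i u)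
  field_simp
end

section
/- Let p, α > 0 and t > 0. Then the function β ↦ ∫₀^t p · (β^α / Γ(α)) · τ^{α−1} · e^{−βτ} dτ has derivative at every β > 0 equal to (p / Γ(α)) · (βt)^{α−1} · e^{−βt} · t. -/
open MeasureTheory intervalIntegral Real

/-- Partial derivative of the cumulative gamma kernel with respect to the rate
parameter `β`: `∂_β Φ(t) = (p / Γ(α)) · (βt)^{α−1} · e^{−βt} · t`. -/
theorem cumulative_gamma_kernel_hasDerivAt_beta
    (p α t : ℝ) (hp : 0 < p) (hα : 0 < α) (ht : 0 < t) :
    ∀ β : ℝ, 0 < β →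
      HasDerivAt
        (fun b : ℝ => ∫ τ in (0 : ℝ)..t,
          p * (b ^ α / Real.Gamma α) * τ ^ (α - 1) * Real.exp (-b * τ))
        ((p / Real.Gamma α) * (β * t) ^ (α - 1) * Real.exp (-β * t) * t)
        β := by
  intro β hβ
  set f : ℝ → ℝ := fun u => u ^ (α - 1) * Real.exp (-u) with hf
  have hβt : 0 < β * t := mul_pos hβ ht
  have hfint : IntervalIntegrable f volume 0 (β * t) :=
    (intervalIntegrable_rpow' (by linarith)).mul_continuousOn
      ((Real.continuous_exp.comp continuous_neg).continuousOn)
  have hfmeas : Measurable f := by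
    simp only [hf]; fun_prop
  have hfcont : ContinuousAt f (β * t) :=
    ((Real.continuousAt_rpow_const _ _ (Or.inl hβt.ne')).mul
      ((Real.continuous_exp.comp continuous_neg).continuousAt))
  have hG : HasDerivAt (fun x => ∫ u in (0:ℝ)..x, f u) (f (β * t)) (β * t) :=
    intervalIntegral.integral_hasDerivAt_right hfint
      (hfmeas.stronglyMeasurable.stronglyMeasurableAtFilter) hfcont
  have hinner : HasDerivAt (fun b : ℝ => b * t) t β := by
    simpa using (hasDerivAt_id β).mul_const t
  have hcomp : HasDerivAt (fun b : ℝ => ∫ u in (0:ℝ)..(b * t), f u)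
      (f (β * t) * t) β := by have := hG.comp β hinner; exact this
  have hfinal := hcomp.const_mul (p / Real.Gamma α)
  have heq : (fun b : ℝ => ∫ τ in (0:ℝ)..t,
        p * (b ^ α / Real.Gamma α) * τ ^ (α - 1) * Real.exp (-b * τ))
      =ᶠ[nhds β] fun b : ℝ =>
        (p / Real.Gamma α) * ∫ u in (0:ℝ)..(b * t), f u := by
    filter_upwards [eventually_gt_nhds hβ] with b hb
    have h1 : (∫ u in (0:ℝ)..(b * t), f u)
        = b • ∫ τ in (0:ℝ)..t, f (b * τ) := by
      rw [intervalIntegral.smul_integral_comp_mul_left f b, mul_zero]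
    have h2 : ∀ τ ∈ Set.uIcc (0:ℝ) t,
        f (b * τ) = b ^ (α - 1) * (τ ^ (α - 1) * Real.exp (-b * τ)) := by
      intro τ hτ
      have hτ0 : 0 ≤ τ := by
        rcases Set.mem_uIcc.mp hτ with h | h
        · exact h.1
        · linarith [h.1, ht]
      simp only [hf]
      rw [Real.mul_rpow hb.le hτ0]
      ring
    have h3 : ∀ τ ∈ Set.uIcc (0:ℝ) t,
        p * (b ^ α / Real.Gamma α) * τ ^ (α - 1) * Real.exp (-b * τ)
          = (p * (b ^ α / Real.Gamma α)) * (τ ^ (α - 1) * Real.exp (-b * τ)) := by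
      intro τ _; ring
    rw [h1, intervalIntegral.integral_congr h2, intervalIntegral.integral_const_mul,
      intervalIntegral.integral_congr h3, intervalIntegral.integral_const_mul]
    have hpow : b ^ α = b * b ^ (α - 1) := by
      have := Real.rpow_add hb 1 (α - 1)
      rw [Real.rpow_one] at this
      rw [show (1:ℝ) + (α - 1) = α by ring] at this
      exact this
    rw [hpow, smul_eq_mul]
    ring
  refine (HasDerivAt.congr_of_eventuallyEq ?_ heq)
  convert hfinal using 1
  · rfl
  simp only [hf]
  ring
end
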